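/- arXiv:1403.7181 — 2 statements merged into one kernel-verified Lean document; each statement's English description precedes it below -/
import Mathlib

section
/- Let A = (E, ≤, ↗, λ) be an asymmetric event structure, X ⊆ E a combinable set of events, A/X its folding and f : E → E/X the folding morphism. Then for every e ∈ E and every x ∈ E/X, if x </X f(e) then there exists e' ∈ E with e' < e and f(e') = x. -/
/-- Restriction of a binary relation to a set. -/
def RelRestrict {G : Type*} (r : G → G → Prop) (S : Set G) : G → G → Prop :=
  fun a b => a ∈ S ∧ b ∈ S ∧ r a b

/-- A binary relation is acyclic on a set: there is no cycle lying within the set. -/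
def AcyclicOn {G : Type*} (r : G → G → Prop) (S : Set G) : Prop :=
  ∀ x, ¬ Relation.TransGen (RelRestrict r S) x x

/-- The data of a labelled asymmetric event structure (AES). -/
structure AES (E : Type*) (Λ : Type*) where
  le : E → E → Prop
  ac : E → E → Prop
  lab : E → Λ

namespace AES

variable {E : Type*} {Λ : Type*}

/-- Strict causality. -/
def lt (A : AES E Λ) (e e' : E) : Prop := A.le e e' ∧ e ≠ e'

/-- The set of causes `⌊e⌋`. -/
def causes (A : AES E Λ) (e : E) : Set E := {e' | A.le e' e}

/-- `⌊Y⌋`, the causes of a set of events. -/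
def causesSet (A : AES E Λ) (Y : Set E) : Set E := ⋃ y ∈ Y, A.causes y

/-- The axioms making the data an asymmetric event structure. -/
structure IsAES (A : AES E Λ) : Prop where
  le_refl : ∀ e, A.le e e
  le_trans : ∀ e e' e'', A.le e e' → A.le e' e'' → A.le e e''
  le_antisymm : ∀ e e', A.le e e' → A.le e' e → e = e'
  causes_finite : ∀ e, (A.causes e).Finite
  lt_ac : ∀ e e', A.lt e e' → A.ac e e'
  ac_heredity : ∀ e e' e'', A.ac e e' → A.lt e' e'' → A.ac e e''
  ac_acyclic : ∀ e, AcyclicOn A.ac (A.causes e)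
  cyclic_ac : ∀ e e', ¬ AcyclicOn A.ac (A.causes e ∪ A.causes e') → A.ac e e'

/-- Conflict on sets of events, inductively generated from cycles of asymmetric
conflict and closed under hereditarity along causality. -/
inductive SetConflict (A : AES E Λ) : Set E → Prop
  | cycle (e : E) (l : List E) : List.Chain A.ac e (l ++ [e]) →
      SetConflict A {x | x ∈ e :: l}
  | heredity (Y : Set E) (e e' : E) :
      SetConflict A (Y ∪ {e}) → A.le e e' → SetConflict A (Y ∪ {e'})

/-- Binary conflict `e # e'`. -/
def Conflict (A : AES E Λ) (e e' : E) : Prop := A.SetConflict {e, e'}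

/-- A set of events is consistent if it contains no two events in conflict. -/
def ConsistentSet (A : AES E Λ) (Y : Set E) : Prop :=
  ∀ e ∈ Y, ∀ e' ∈ Y, ¬ A.Conflict e e'

/-- Immediate causality `e' <_μ e`. -/
def ltMu (A : AES E Λ) (e' e : E) : Prop :=
  A.lt e' e ∧ ¬ ∃ e'', A.lt e' e'' ∧ A.lt e'' e

/-- Direct asymmetric conflict `e ↗_μ e''`. -/
def acMu (A : AES E Λ) (e e'' : E) : Prop :=
  A.ac e e'' ∧ ¬ ∃ e', A.ac e e' ∧ A.lt e' e''

/-- Direct binary conflict `e #_μ e'`. -/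
def confMu (A : AES E Λ) (e e' : E) : Prop := A.acMu e e' ∧ A.acMu e' e

/-- Configurations: finite, causally closed and free of asymmetric-conflict cycles. -/
def Config (A : AES E Λ) (C : Set E) : Prop :=
  C.Finite ∧ (∀ e ∈ C, A.causes e ⊆ C) ∧ AcyclicOn A.ac C

/-- Similar sets of events. -/
def Similar (A : AES E Λ) (X : Set E) : Prop :=
  ∀ e ∈ X, ∀ e' ∈ X,
    A.lab e = A.lab e' ∧ (e ≠ e' → A.Conflict e e') ∧
    ∀ e'', e'' ∉ X →
      (A.ac e e'' → (A.ac e' e'' ∨ A.ac e'' e)) ∧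
      (A.acMu e'' e → A.ac e'' e')

/-- The strict causes `S(X)`. -/
def strictCauses (A : AES E Λ) (X : Set E) : Set E := {e' | ∀ e ∈ X, A.lt e' e}

/-- The weak predecessors `W(X)`. -/
def weakPred (A : AES E Λ) (X : Set E) : Set E :=
  {e'' | ∃ e ∈ X, ∃ e' ∈ X, A.ac e'' e ∧ ¬ A.ac e' e''} \ (A.strictCauses X ∪ X)

/-- The history `C⟦e⟧` of `e` in a configuration `C`. -/
def history (A : AES E Λ) (C : Set E) (e : E) : Set E :=
  {e' | e' ∈ C ∧ Relation.ReflTransGen (RelRestrict A.ac C) e' e}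

/-- The set of possible histories of `e`. -/
def Hist (A : AES E Λ) (e : E) : Set (Set E) :=
  {h | ∃ C, A.Config C ∧ e ∈ C ∧ h = A.history C e}

/-- Combinable sets of events. -/
def Combinable (A : AES E Λ) (X : Set E) : Prop :=
  A.Similar X ∧
  ∀ Y, Y ⊆ A.weakPred X → A.ConsistentSet Y →
    ∃ e ∈ X, (∀ e' ∈ Y, ¬ A.ac e e') ∧
      ∃ h ∈ A.Hist e, h \ {e} ⊆ A.strictCauses X ∪ A.causesSet Y

/-- The carrier of the folded structure: `(E \ X) ∪ {e_X}`, where the fresh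
event `e_X` is encoded as `none`. -/
def foldCarrier (X : Set E) : Set (Option E) :=
  {x | x = none ∨ ∃ e, e ∉ X ∧ x = some e}

/-- Causality of the folded structure. -/
def foldLe (A : AES E Λ) (X : Set E) : Option E → Option E → Prop
  | some e, some e' => e ∉ X ∧ e' ∉ X ∧ A.le e e'
  | some e, none => e ∈ A.strictCauses X
  | none, some e => e ∉ X ∧ ∃ e' ∈ X, A.lt e' e
  | none, none => True

/-- Asymmetric conflict of the folded structure. -/
def foldAc (A : AES E Λ) (X : Set E) : Option E → Option E → Prop
  | some e, some e' => e ∉ X ∧ e' ∉ X ∧ A.ac e e'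
  | some e', none => e' ∉ X ∧ ∀ e ∈ X, A.ac e' e
  | none, some e' => e' ∉ X ∧ ∀ e ∈ X, A.ac e e'
  | none, none => False

open Classical in
/-- Labelling of the folded structure. -/
noncomputable def foldLab [Inhabited Λ] (A : AES E Λ) (X : Set E) : Option E → Λ
  | some e => A.lab e
  | none => if h : X.Nonempty then A.lab h.some else default

open Classical in
/-- The folding morphism `f : E → E/X`. -/
noncomputable def foldMap (X : Set E) : E → Option E :=
  fun e => if e ∈ X then none else some e

end AES


namespace AES

variable {E Λ : Type*} {A : AES E Λ} {X : Set E} {a e : E}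

theorem foldMap_of_mem (h : e ∈ X) : foldMap X e = none := by
  simp [foldMap, h]

theorem foldMap_of_notMem (h : e ∉ X) : foldMap X e = some e := by
  simp [foldMap, h]

theorem notMem_of_mem_strictCauses (h : a ∈ A.strictCauses X) : a ∉ X :=
  fun haX => (h a haX).2 rfl

theorem notMem_of_foldLe_some {y : Option E} (h : A.foldLe X (some a) y) : a ∉ X := by
  cases y with
  | none => exact notMem_of_mem_strictCauses h
  | some _ => exact h.1

theorem lt_of_foldLe_some_foldMap (hle : A.foldLe X (some a) (foldMap X e))
    (hne : some a ≠ foldMap X e) : A.lt a e := by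
  by_cases he : e ∈ X
  · rw [foldMap_of_mem he] at hle
    exact hle e he
  · rw [foldMap_of_notMem he] at hle hne
    exact ⟨hle.2.2, fun hae => hne (congrArg some hae)⟩

theorem exists_mem_lt_of_foldLe_none_foldMap (hle : A.foldLe X none (foldMap X e))
    (hne : none ≠ foldMap X e) : ∃ a ∈ X, A.lt a e := by
  by_cases he : e ∈ X
  · exact absurd (foldMap_of_mem he).symm hne
  · rw [foldMap_of_notMem he] at hle
    exact hle.2

end AES

open AES in
theorem aes_folding_reflects_strict_causality_general
    {E Λ : Type*} (A : AES E Λ) (X : Set E)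
    (e : E) (x : Option E)
    (hlt : A.foldLe X x (foldMap X e) ∧ x ≠ foldMap X e) :
    ∃ e' : E, A.lt e' e ∧ foldMap X e' = x := by
  obtain ⟨hle, hne⟩ := hlt
  cases x with
  | none =>
    obtain ⟨a, haX, hae⟩ := exists_mem_lt_of_foldLe_none_foldMap hle hne
    exact ⟨a, hae, foldMap_of_mem haX⟩
  | some a =>
    exact ⟨a, lt_of_foldLe_some_foldMap hle hne, foldMap_of_notMem (notMem_of_foldLe_some hle)⟩

open AES in
/-- causality in the folded AES is reflected by the folding
morphism: if `x </X f(e)` then there is `e' < e` with `f(e') = x`. -/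
theorem aes_folding_reflects_strict_causality
    {E Λ : Type*} (A : AES E Λ) (hA : A.IsAES) (X : Set E) (hX : A.Combinable X)
    (e : E) (x : Option E) (hx : x ∈ foldCarrier X)
    (hlt : A.foldLe X x (foldMap X e) ∧ x ≠ foldMap X e) :
    ∃ e' : E, A.lt e' e ∧ foldMap X e' = x :=
  aes_folding_reflects_strict_causality_general A X e x hlt
end

section
/- Let A = (E, ≤, ↗, λ) be an asymmetric event structure and X ⊆ E a combinable set of events. Then the folding A/X = (E/X, ≤/X, ↗/X, λ/X) is itself an asymmetric event structure: ≤/X is a (well-founded) partial order with ⌊x⌋ = {x' ∈ E/X | x' ≤/X x} finite for every x ∈ E/X, and ↗/X satisfies the four AES axioms, in particular ↗/X restricted to ⌊x⌋ is acyclic for every x ∈ E/X. -/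
/-- The axioms of an asymmetric event structure, relative to a carrier set of
events. -/
structure IsAESOn {G : Type*} (carrier : Set G) (le ac : G → G → Prop) : Prop where
  le_refl : ∀ x ∈ carrier, le x x
  le_trans : ∀ x ∈ carrier, ∀ y ∈ carrier, ∀ z ∈ carrier, le x y → le y z → le x z
  le_antisymm : ∀ x ∈ carrier, ∀ y ∈ carrier, le x y → le y x → x = y
  wellFounded : carrier.WellFoundedOn (fun a b => le a b ∧ a ≠ b)
  causes_finite : ∀ x ∈ carrier, {y | y ∈ carrier ∧ le y x}.Finite
  lt_ac : ∀ x ∈ carrier, ∀ y ∈ carrier, le x y → x ≠ y → ac x y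
  ac_heredity : ∀ x ∈ carrier, ∀ y ∈ carrier, ∀ z ∈ carrier,
    ac x y → le y z → y ≠ z → ac x z
  ac_acyclic : ∀ x ∈ carrier, AcyclicOn ac {y | y ∈ carrier ∧ le y x}
  cyclic_ac : ∀ x ∈ carrier, ∀ y ∈ carrier,
    ¬ AcyclicOn ac ({z | z ∈ carrier ∧ le z x} ∪ {z | z ∈ carrier ∧ le z y}) → ac x y

theorem Set.wellFoundedOn_of_finite_lt {G : Type*} {S : Set G} {r : G → G → Prop}
    (htrans : ∀ a ∈ S, ∀ b ∈ S, ∀ c ∈ S, r a b → r b c → r a c)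
    (hirrefl : ∀ a ∈ S, ¬ r a a)
    (hfin : ∀ a ∈ S, {b | b ∈ S ∧ r b a}.Finite) :
    S.WellFoundedOn r := by
  have hlt : ∀ a b : S, r a b →
      {c | c ∈ S ∧ r c a}.ncard < {c | c ∈ S ∧ r c b}.ncard := by
    intro a b hab
    refine Set.ncard_lt_ncard ⟨fun c hc => ⟨hc.1, htrans c hc.1 a a.2 b b.2 hc.2 hab⟩,
      fun hsub => hirrefl a a.2 (hsub ⟨a.2, hab⟩).2⟩ (hfin b b.2)
  exact Subrelation.wf (hlt _ _) (measure fun a : S => {c | c ∈ S ∧ r c a}.ncard).wf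

theorem AcyclicOn.of_mapsTo {G H : Type*} {r : G → G → Prop} {s : H → H → Prop}
    {D : Set G} {D' : Set H} {f : G → H} (h : AcyclicOn s D') (hf : Set.MapsTo f D D')
    (hrel : ∀ a ∈ D, ∀ b ∈ D, r a b → s (f a) (f b)) : AcyclicOn r D :=
  fun x hx => h (f x) <| Relation.TransGen.lift f
    (fun a b ⟨ha, hb, hab⟩ => ⟨hf ha, hf hb, hrel a ha b hb hab⟩) x x hx

namespace AES

variable {E Λ : Type*} {A : AES E Λ} {X : Set E}

theorem IsAES.ac_irrefl (hA : A.IsAES) (e : E) : ¬ A.ac e e := fun h =>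
  hA.ac_acyclic e e (.single ⟨hA.le_refl e, hA.le_refl e, h⟩)

theorem Combinable.nonempty (hX : A.Combinable X) : X.Nonempty := by
  obtain ⟨e, he, -⟩ := hX.2 ∅ (Set.empty_subset _) (fun _ h => h.elim)
  exact ⟨e, he⟩

theorem notMem_of_mem_strictCauses_s4 {e : E} (he : e ∈ A.strictCauses X) : e ∉ X :=
  fun heX => (he e heX).2 rfl

theorem some_mem_foldCarrier {e : E} : some e ∈ foldCarrier X ↔ e ∉ X := by
  simp [foldCarrier]

/-- `⌊x⌋` in the folded structure. -/
def foldCauses (A : AES E Λ) (X : Set E) (x : Option E) : Set (Option E) :=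
  {y | y ∈ foldCarrier X ∧ A.foldLe X y x}

theorem le_getD_of_foldLe_some {x₀ a : E} {x : Option E} (hx₀ : x₀ ∈ X)
    (h : A.foldLe X (some a) x) : A.le a (x.getD x₀) := by
  cases x with
  | none => exact (h x₀ hx₀).1
  | some e => exact h.2.2

theorem foldLe_refl (hA : A.IsAES) {x : Option E} (hx : x ∈ foldCarrier X) :
    A.foldLe X x x := by
  cases x with
  | none => trivial
  | some e => exact ⟨some_mem_foldCarrier.1 hx, some_mem_foldCarrier.1 hx, hA.le_refl e⟩

theorem foldLe_trans (hA : A.IsAES) {x y z : Option E} (hxy : A.foldLe X x y)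
    (hyz : A.foldLe X y z) : A.foldLe X x z := by
  match x, y, z, hxy, hyz with
  | none, none, _, _, h => exact h
  | none, some b, none, _, _ => trivial
  | none, some b, some c, ⟨_, x, hx, hxb⟩, ⟨_, hc, hbc⟩ =>
    exact ⟨hc, x, hx, hA.le_trans _ _ _ hxb.1 hbc,
      fun h => hxb.2 (hA.le_antisymm _ _ hxb.1 (h ▸ hbc))⟩
  | some a, none, none, h, _ => exact h
  | some a, none, some c, ha, ⟨hc, x, hx, hxc⟩ =>
    exact ⟨notMem_of_mem_strictCauses_s4 ha, hc, hA.le_trans _ _ _ (ha x hx).1 hxc.1⟩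
  | some a, some b, none, ⟨ha, _, hab⟩, hb =>
    exact fun x hx => ⟨hA.le_trans _ _ _ hab (hb x hx).1, fun h => ha (h ▸ hx)⟩
  | some a, some b, some c, ⟨ha, _, hab⟩, ⟨_, hc, hbc⟩ =>
    exact ⟨ha, hc, hA.le_trans _ _ _ hab hbc⟩

theorem foldLe_antisymm (hA : A.IsAES) {x y : Option E} (hxy : A.foldLe X x y)
    (hyx : A.foldLe X y x) : x = y := by
  match x, y, hxy, hyx with
  | none, none, _, _ => rfl
  | none, some b, ⟨_, x, hx, hxb⟩, hb =>
    exact (hxb.2 (hA.le_antisymm _ _ hxb.1 (hb x hx).1)).elim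
  | some a, none, ha, ⟨_, x, hx, hxa⟩ =>
    exact (hxa.2 (hA.le_antisymm _ _ hxa.1 (ha x hx).1)).elim
  | some a, some b, ⟨_, _, hab⟩, ⟨_, _, hba⟩ => rw [hA.le_antisymm _ _ hab hba]

theorem foldCauses_finite (hA : A.IsAES) (hne : X.Nonempty) (x : Option E) :
    (A.foldCauses X x).Finite := by
  refine (((hA.causes_finite (x.getD hne.some)).image some).insert none).subset ?_
  rintro (_ | a) ⟨-, ha⟩
  · exact Set.mem_insert _ _
  · exact Set.mem_insert_of_mem _ ⟨a, le_getD_of_foldLe_some hne.some_mem ha, rfl⟩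

theorem foldAc_of_foldLe (hA : A.IsAES) (hsim : A.Similar X) {x y : Option E}
    (hxy : A.foldLe X x y) (hxy' : x ≠ y) : A.foldAc X x y := by
  match x, y, hxy with
  | none, none, _ => exact (hxy' rfl).elim
  | none, some b, ⟨hb, x, hx, hxb⟩ =>
    refine ⟨hb, fun x' hx' => ?_⟩
    -- similarity spreads `x ↗ b` over `X`; its other alternative `b ↗ x` contradicts `x < b`
    refine ((hsim x hx x' hx').2.2 b hb).1 (hA.lt_ac _ _ hxb) |>.resolve_right fun hbx => ?_
    exact hA.ac_irrefl b (hA.ac_heredity _ _ _ hbx hxb)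
  | some a, none, ha =>
    exact ⟨notMem_of_mem_strictCauses_s4 ha, fun x hx => hA.lt_ac _ _ (ha x hx)⟩
  | some a, some b, ⟨ha, hb, hab⟩ =>
    exact ⟨ha, hb, hA.lt_ac _ _ ⟨hab, fun h => hxy' (h ▸ rfl)⟩⟩

theorem foldAc_heredity (hA : A.IsAES) (hne : X.Nonempty) {x y z : Option E}
    (hxy : A.foldAc X x y) (hyz : A.foldLe X y z) (hyz' : y ≠ z) : A.foldAc X x z := by
  match x, y, z, hxy, hyz with
  | none, some b, none, ⟨_, hb⟩, hbX =>
    exact (hA.ac_irrefl _ (hA.ac_heredity _ _ _ (hb _ hne.some_mem) (hbX _ hne.some_mem))).elim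
  | none, some b, some c, ⟨_, hb⟩, ⟨_, hc, hbc⟩ =>
    exact ⟨hc, fun x hx => hA.ac_heredity _ _ _ (hb x hx) ⟨hbc, fun h => hyz' (h ▸ rfl)⟩⟩
  | some a, none, none, _, _ => exact (hyz' rfl).elim
  | some a, none, some c, ⟨ha, hax⟩, ⟨hc, x, hx, hxc⟩ =>
    exact ⟨ha, hc, hA.ac_heredity _ _ _ (hax x hx) hxc⟩
  | some a, some b, none, ⟨ha, _, hab⟩, hb =>
    exact ⟨ha, fun x hx => hA.ac_heredity _ _ _ hab (hb x hx)⟩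
  | some a, some b, some c, ⟨ha, _, hab⟩, ⟨_, hc, hbc⟩ =>
    exact ⟨ha, hc, hA.ac_heredity _ _ _ hab ⟨hbc, fun h => hyz' (h ▸ rfl)⟩⟩

theorem ac_getD_of_foldAc {x₀ : E} {x y : Option E} (hx₀ : x₀ ∈ X) (h : A.foldAc X x y) :
    A.ac (x.getD x₀) (y.getD x₀) := by
  match x, y, h with
  | none, some b, ⟨_, h⟩ => exact h x₀ hx₀
  | some a, none, ⟨_, h⟩ => exact h x₀ hx₀
  | some a, some b, ⟨_, _, h⟩ => exact h

/-- `x₀ ∈ X` may stand in for `e_X` next to `x` and `y`: collapsing `e_X` to `x₀` maps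
`⌊x⌋ ∪ ⌊y⌋` of the folding into the corresponding causes in `A`. -/
def IsFoldRepr (A : AES E Λ) (X : Set E) (x y : Option E) (x₀ : E) : Prop :=
  x₀ ∈ X ∧
    (A.foldLe X none x ∨ A.foldLe X none y → x₀ ∈ A.causes (x.getD x₀) ∪ A.causes (y.getD x₀))

theorem IsFoldRepr.mapsTo {x y : Option E} {x₀ : E} (h : A.IsFoldRepr X x y x₀) :
    Set.MapsTo (·.getD x₀) (A.foldCauses X x ∪ A.foldCauses X y)
      (A.causes (x.getD x₀) ∪ A.causes (y.getD x₀)) := by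
  rintro (_ | a) (⟨-, ha⟩ | ⟨-, ha⟩)
  · exact h.2 (Or.inl ha)
  · exact h.2 (Or.inr ha)
  · exact Or.inl (le_getD_of_foldLe_some h.1 ha)
  · exact Or.inr (le_getD_of_foldLe_some h.1 ha)

theorem IsFoldRepr.acyclicOn {x y : Option E} {x₀ : E} (h : A.IsFoldRepr X x y x₀)
    (hacy : AcyclicOn A.ac (A.causes (x.getD x₀) ∪ A.causes (y.getD x₀))) :
    AcyclicOn (A.foldAc X) (A.foldCauses X x ∪ A.foldCauses X y) :=
  hacy.of_mapsTo h.mapsTo fun _ _ _ _ hab => ac_getD_of_foldAc h.1 hab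

theorem isFoldRepr_none_left (hA : A.IsAES) {x₀ : E} (hx₀ : x₀ ∈ X) (y : Option E) :
    A.IsFoldRepr X none y x₀ :=
  ⟨hx₀, fun _ => Or.inl (hA.le_refl x₀)⟩

theorem isFoldRepr_none_right (hA : A.IsAES) {x₀ : E} (hx₀ : x₀ ∈ X) (x : Option E) :
    A.IsFoldRepr X x none x₀ :=
  ⟨hx₀, fun _ => Or.inr (hA.le_refl x₀)⟩

theorem exists_isFoldRepr (hA : A.IsAES) (hne : X.Nonempty) (x y : Option E) :
    ∃ x₀, A.IsFoldRepr X x y x₀ := by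
  have hbelow : ∀ z, A.foldLe X none z → ∃ x₀ ∈ X, A.le x₀ (z.getD x₀) := by
    rintro (_ | e) h
    · exact ⟨hne.some, hne.some_mem, hA.le_refl _⟩
    · obtain ⟨-, x₀, hx₀, hlt⟩ := h
      exact ⟨x₀, hx₀, hlt.1⟩
  by_cases hx : A.foldLe X none x
  · obtain ⟨x₀, hx₀, hle⟩ := hbelow x hx
    exact ⟨x₀, hx₀, fun _ => Or.inl hle⟩
  by_cases hy : A.foldLe X none y
  · obtain ⟨x₀, hx₀, hle⟩ := hbelow y hy
    exact ⟨x₀, hx₀, fun _ => Or.inr hle⟩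
  exact ⟨hne.some, hne.some_mem, fun h => (h.elim hx hy).elim⟩

theorem foldAc_of_forall_isFoldRepr (hA : A.IsAES) (hne : X.Nonempty) {x y : Option E}
    (hx : x ∈ foldCarrier X) (hy : y ∈ foldCarrier X)
    (h : ∀ x₀, A.IsFoldRepr X x y x₀ → A.ac (x.getD x₀) (y.getD x₀)) : A.foldAc X x y := by
  match x, y with
  | none, none => exact hA.ac_irrefl _ (h _ (isFoldRepr_none_left hA hne.some_mem none))
  | none, some b =>
    exact ⟨some_mem_foldCarrier.1 hy, fun x₀ hx₀ => h x₀ (isFoldRepr_none_left hA hx₀ _)⟩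
  | some a, none =>
    exact ⟨some_mem_foldCarrier.1 hx, fun x₀ hx₀ => h x₀ (isFoldRepr_none_right hA hx₀ _)⟩
  | some a, some b =>
    obtain ⟨x₀, hx₀⟩ := exists_isFoldRepr hA hne (some a) (some b)
    exact ⟨some_mem_foldCarrier.1 hx, some_mem_foldCarrier.1 hy, h x₀ hx₀⟩

theorem foldAc_acyclicOn_foldCauses (hA : A.IsAES) (hne : X.Nonempty) (x : Option E) :
    AcyclicOn (A.foldAc X) (A.foldCauses X x) := by
  obtain ⟨x₀, h⟩ := exists_isFoldRepr hA hne x x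
  simpa only [Set.union_self] using
    h.acyclicOn (by simpa only [Set.union_self] using hA.ac_acyclic (x.getD x₀))

theorem foldAc_of_not_acyclicOn (hA : A.IsAES) (hne : X.Nonempty) {x y : Option E}
    (hx : x ∈ foldCarrier X) (hy : y ∈ foldCarrier X)
    (hcyc : ¬ AcyclicOn (A.foldAc X) (A.foldCauses X x ∪ A.foldCauses X y)) :
    A.foldAc X x y :=
  foldAc_of_forall_isFoldRepr hA hne hx hy fun _ h => hA.cyclic_ac _ _ (mt h.acyclicOn hcyc)

end AES

open AES in
/-- the folding of an AES on a combinable set of events is itself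
an asymmetric event structure. -/
theorem aes_folding_isAES
    {E Λ : Type*} (A : AES E Λ) (hA : A.IsAES) (X : Set E) (hX : A.Combinable X) :
    IsAESOn (foldCarrier X) (A.foldLe X) (A.foldAc X) := by
  have hne := hX.nonempty
  exact {
    le_refl := fun _ hx => foldLe_refl hA hx
    le_trans := fun _ _ _ _ _ _ => foldLe_trans hA
    le_antisymm := fun _ _ _ _ => foldLe_antisymm hA
    wellFounded := Set.wellFoundedOn_of_finite_lt
      (fun _ _ _ _ _ _ hab hbc => ⟨foldLe_trans hA hab.1 hbc.1,
        fun h => hab.2 (foldLe_antisymm hA hab.1 (h ▸ hbc.1))⟩)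
      (fun _ _ h => h.2 rfl)
      (fun x _ => (foldCauses_finite hA hne x).subset fun _ hy => ⟨hy.1, hy.2.1⟩)
    causes_finite := fun x _ => foldCauses_finite hA hne x
    lt_ac := fun _ _ _ _ => foldAc_of_foldLe hA hX.1
    ac_heredity := fun _ _ _ _ _ _ => foldAc_heredity hA hne
    ac_acyclic := fun x _ => foldAc_acyclicOn_foldCauses hA hne x
    cyclic_ac := fun _ hx _ hy => foldAc_of_not_acyclicOn hA hne hx hy }
end
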